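/- Let τ = (1 + √5)/2 and λ_k = (⌈k/τ⌉ + kτ)/τ² for k ∈ ℤ, and let s ≥ 2. For each k ∈ ℤ with λ_{k+1} − λ_k = 1, let N_k be the smallest integer N ≥ 1 such that #{ i : 1 ≤ i ≤ N−1, λ_{k+i} − λ_{k+i−1} = 1 } = 2s − 1 (i.e. the open interval (λ_k, λ_{k+N}) contains exactly 2s−1 points of Λ \ τ²Λ). Then, with p = ⌈(2s−2)τ⌉ + 1, every such N_k equals p or p + 1. -/

import Mathlib

/-!
Write `g j = ⌈j/τ⌉`. Since `λ_j = (g j + jτ)/τ²` and `τ² = τ + 1`, the gap `λ_j - λ_{j-1}`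
equals 1 exactly when `g` increases at `j`, and `g` increases by 0 or 1 at each step. Hence the
number of L-tiles among the gaps at `k+1, …, k+M-1` telescopes to `g (k+M-1) - g k`, and
minimality of `N` pins down `g (k+N-2) = g k + n`, `g (k+N-1) = g k + n + 1` with `n = 2s-2`.
Unfolding the ceilings, `N - 2 = ⌊nτ + δ⌋` with `δ = τ g k - k`, and `δ ∈ [0, 1)` because the
gap at `k+1` is also an L-tile. So `N - 2` is `⌈nτ⌉ - 1` or `⌈nτ⌉`.
-/

open MeasureTheory Set Filter

noncomputable section

/-- The golden mean `τ = (1 + √5)/2`. -/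
def tau : ℝ := (1 + Real.sqrt 5) / 2

/-- The cut-and-project model set `Σ^Ω = { a + bτ : a, b ∈ ℤ, a - b/τ ∈ Ω }`. -/
def SigmaSet (Ω : Set ℝ) : Set ℝ :=
  {x | ∃ a b : ℤ, x = (a : ℝ) + (b : ℝ) * tau ∧ (a : ℝ) - (b : ℝ) / tau ∈ Ω}

/-- The increasing enumeration `λ_k = (⌈k/τ⌉ + kτ)/τ²` of the rescaled Fibonacci
chain `Σ^{[0,τ²)}`. -/
def fibChain (k : ℤ) : ℝ := ((⌈(k : ℝ) / tau⌉ : ℝ) + (k : ℝ) * tau) / tau ^ 2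

lemma tau_pos : 0 < tau := Real.goldenRatio_pos

lemma one_le_tau : 1 ≤ tau := Real.one_lt_goldenRatio.le

lemma tau_sq : tau ^ 2 = tau + 1 := Real.goldenRatio_sq

def ceilDivTau (j : ℤ) : ℤ := ⌈(j : ℝ) / tau⌉

lemma ceilDivTau_eq_iff {j m : ℤ} :
    ceilDivTau j = m ↔ ((m : ℝ) - 1) * tau < j ∧ (j : ℝ) ≤ m * tau := by
  rw [ceilDivTau, Int.ceil_eq_iff, lt_div_iff₀ tau_pos, div_le_iff₀ tau_pos]

lemma ceilDivTau_sub_one_le (j : ℤ) : ceilDivTau (j - 1) ≤ ceilDivTau j := by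
  unfold ceilDivTau
  gcongr
  · exact tau_pos.le
  · linarith

lemma ceilDivTau_le_sub_one_add_one (j : ℤ) : ceilDivTau j ≤ ceilDivTau (j - 1) + 1 := by
  have hdiv : (j : ℝ) / tau ≤ ((j - 1 : ℤ) : ℝ) / tau + 1 := by
    rw [div_add_one tau_pos.ne', div_le_div_iff_of_pos_right tau_pos]
    push_cast
    linarith [one_le_tau]
  calc ceilDivTau j ≤ ⌈((j - 1 : ℤ) : ℝ) / tau + 1⌉ := Int.ceil_mono hdiv
    _ = ceilDivTau (j - 1) + 1 := Int.ceil_add_one _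

lemma fibChain_sub_eq_one_iff (j : ℤ) :
    fibChain j - fibChain (j - 1) = 1 ↔ ceilDivTau j = ceilDivTau (j - 1) + 1 := by
  rw [fibChain, fibChain, div_sub_div_same, div_eq_one_iff_eq (pow_ne_zero 2 tau_pos.ne'), tau_sq,
    ceilDivTau, ceilDivTau, ← Int.cast_inj (α := ℝ)]
  push_cast
  constructor <;> intro h <;> linarith

lemma ncard_unit_steps {f : ℤ → ℤ} (hmono : ∀ j, f (j - 1) ≤ f j)
    (hstep : ∀ j, f j ≤ f (j - 1) + 1) (k : ℤ) (n : ℕ) :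
    ({i : ℕ | 1 ≤ i ∧ i ≤ n ∧ f (k + i) = f (k + i - 1) + 1}.ncard : ℤ) =
      f (k + n) - f k := by
  classical
  have hset : {i : ℕ | 1 ≤ i ∧ i ≤ n ∧ f (k + i) = f (k + i - 1) + 1} =
      ↑((Finset.Icc 1 n).filter fun i : ℕ => f (k + i) = f (k + i - 1) + 1) := by
    ext i; simp [and_assoc]
  have hterm : ∀ i : ℕ, (if f (k + i) = f (k + i - 1) + 1 then (1 : ℤ) else 0) =
      f (k + i) - f (k + i - 1) := by
    intro i
    have := hmono (k + i)
    have := hstep (k + i)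
    split_ifs <;> omega
  have htelescope (m : ℕ) :
      ∑ i ∈ Finset.Icc 1 m, (f (k + i) - f (k + i - 1)) = f (k + m) - f k := by
    induction m with
    | zero => simp
    | succ m ih => rw [Finset.sum_Icc_succ_top (by omega), ih]; push_cast; ring_nf
  rw [hset, Set.ncard_coe_finset, Finset.natCast_card_filter,
    Finset.sum_congr rfl fun i _ => hterm i, htelescope]

lemma ncard_fibChain_gap_eq_one (k : ℤ) (M : ℕ) :
    ({i : ℕ | 1 ≤ i ∧ i ≤ M - 1 ∧
      fibChain (k + i) - fibChain (k + i - 1) = 1}.ncard : ℤ) =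
      ceilDivTau (k + (M - 1 : ℕ)) - ceilDivTau k := by
  simp_rw [fibChain_sub_eq_one_iff]
  exact ncard_unit_steps ceilDivTau_sub_one_le ceilDivTau_le_sub_one_add_one k (M - 1)

lemma ceilDivTau_eq_of_isLeast {k : ℤ} {n N : ℕ}
    (hN : IsLeast {M : ℕ | 1 ≤ M ∧
      ({i : ℕ | 1 ≤ i ∧ i ≤ M - 1 ∧
        fibChain (k + (i : ℤ)) - fibChain (k + (i : ℤ) - 1) = 1}).ncard = n + 1} N) :
    ceilDivTau (k + N - 2) = ceilDivTau k + n ∧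
      ceilDivTau (k + N - 1) = ceilDivTau k + n + 1 := by
  obtain ⟨⟨hN1, hcount⟩, hleast⟩ := hN
  have hcountN := ncard_fibChain_gap_eq_one k N
  rw [hcount] at hcountN
  have hN2 : 2 ≤ N := by
    by_contra h
    obtain rfl : N = 1 := by omega
    simp only [Nat.sub_self, Nat.cast_zero, add_zero, sub_self] at hcountN
    omega
  have hcountPrev : ceilDivTau (k + N - 2) - ceilDivTau k ≠ n + 1 := by
    rw [show k + N - 2 = k + ((N - 1 - 1 : ℕ) : ℤ) by omega, ← ncard_fibChain_gap_eq_one]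
    exact_mod_cast fun h => absurd (hleast ⟨by omega, h⟩) (by omega)
  have hmono := ceilDivTau_sub_one_le (k + N - 1)
  have hstep := ceilDivTau_le_sub_one_add_one (k + N - 1)
  rw [show k + N - 1 - 1 = k + N - 2 by ring] at hmono hstep
  rw [show k + ((N - 1 : ℕ) : ℤ) = k + N - 1 by omega] at hcountN
  omega

lemma floor_add_eq_ceil_sub_one_or_ceil (x : ℝ) {δ : ℝ} (hδ0 : 0 ≤ δ) (hδ1 : δ < 1) :
    ⌊x + δ⌋ = ⌈x⌉ - 1 ∨ ⌊x + δ⌋ = ⌈x⌉ := by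
  have hlo : ⌈x⌉ - 1 ≤ ⌊x + δ⌋ :=
    Int.le_floor.mpr (by push_cast; linarith [Int.ceil_lt_add_one x])
  have hhi : ⌊x + δ⌋ ≤ ⌈x⌉ :=
    Int.floor_le_iff.mpr (by linarith [Int.le_ceil x])
  omega

/-- for `k` with `λ_{k+1} - λ_k = 1`, if `N` is the smallest integer
`≥ 1` such that the word `(λ_k, λ_{k+N})` contains exactly `2s - 1` points of
`Λ \ τ²Λ` (i.e. `2s - 1` indices `1 ≤ i ≤ N-1` with gap `λ_{k+i} - λ_{k+i-1} = 1`),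
then `N = p` or `N = p + 1` where `p = ⌈(2s-2)τ⌉ + 1`. -/
theorem statement16 (s : ℕ) (hs : 2 ≤ s) (k : ℤ)
    (hk : fibChain (k + 1) - fibChain k = 1) (N : ℕ)
    (hN : IsLeast {M : ℕ | 1 ≤ M ∧
      ({i : ℕ | 1 ≤ i ∧ i ≤ M - 1 ∧
        fibChain (k + (i : ℤ)) - fibChain (k + (i : ℤ) - 1) = 1}).ncard = 2 * s - 1} N) :
    (N : ℤ) = ⌈((2 * s - 2 : ℕ) : ℝ) * tau⌉ + 1 ∨
      (N : ℤ) = ⌈((2 * s - 2 : ℕ) : ℝ) * tau⌉ + 2 := by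
  set n := 2 * s - 2
  rw [show 2 * s - 1 = n + 1 by omega] at hN
  obtain ⟨hprev, hlast⟩ := ceilDivTau_eq_of_isLeast hN
  set g := ceilDivTau k
  have hk' : ceilDivTau (k + 1) = g + 1 := by
    simpa using (fibChain_sub_eq_one_iff (k + 1)).mp (by simpa using hk)
  obtain ⟨-, hg_ge⟩ := ceilDivTau_eq_iff.mp (rfl : ceilDivTau k = g)
  obtain ⟨hg_lt, -⟩ := ceilDivTau_eq_iff.mp hk'
  obtain ⟨-, hprev⟩ := ceilDivTau_eq_iff.mp hprev
  obtain ⟨hlast, -⟩ := ceilDivTau_eq_iff.mp hlast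
  push_cast at hg_lt hprev hlast
  have hfloor : ⌊(n : ℝ) * tau + (g * tau - k)⌋ = N - 2 := by
    rw [Int.floor_eq_iff]
    push_cast
    constructor <;> linarith
  rcases floor_add_eq_ceil_sub_one_or_ceil ((n : ℝ) * tau) (δ := g * tau - k)
    (by linarith) (by linarith) with h | h <;> omega
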